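/- arXiv:2410.22038 — 2 statements merged into one kernel-verified Lean document; each statement's English description precedes it below -/
import Mathlib

section
/- Let 𝒫 be a family of Borel probability measures on ℝ^d, let ℋ be a collection of vector subspaces of ℝ^d, and let m ≥ 1. Suppose that (i) for each H ∈ ℋ, the distinct measures in the set {P_H : P ∈ 𝒫} form a linearly independent family; and (ii) for every partition of ℋ into 2m−1 subsets, at least one of the subsets is a Cramér–Wold system for 𝒫. If P and Q are each convex combinations of m measures from 𝒫 and P_H = Q_H for all H ∈ ℋ, then P = Q. -/
open MeasureTheory
open scoped NNReal ENNReal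

/-- The projection of a measure `P` on `ℝ^d` onto a vector subspace `H`:
the pushforward of `P` under the orthogonal projection onto `H`
(viewed inside the ambient space). -/
noncomputable def projMeasure {d : ℕ} (H : Submodule ℝ (EuclideanSpace ℝ (Fin d)))
    (P : Measure (EuclideanSpace ℝ (Fin d))) : Measure (EuclideanSpace ℝ (Fin d)) :=
  P.map (fun x => (H.orthogonalProjection x : EuclideanSpace ℝ (Fin d)))

/-- A family of (finite) measures is linearly independent: any vanishing real linear
combination of distinct members (as signed measures) has all coefficients zero. -/
def LinIndepMeasures {α : Type*} [MeasurableSpace α] (Pfam : Set (Measure α)) : Prop :=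
  ∀ (n : ℕ) (P : Fin n → Measure α) (hfin : ∀ j, IsFiniteMeasure (P j)),
    (∀ j, P j ∈ Pfam) → Function.Injective P →
    ∀ lam : Fin n → ℝ,
      (∑ j, lam j • @Measure.toSignedMeasure α _ (P j) (hfin j)) = 0 →
      ∀ j, lam j = 0

/-- `HH` is a Cramér–Wold system for `Pfam` if equality of the projections onto every
member of `HH` implies equality of the measures. -/
def IsCramerWoldSystem {d : ℕ} (Pfam : Set (Measure (EuclideanSpace ℝ (Fin d))))
    (HH : Set (Submodule ℝ (EuclideanSpace ℝ (Fin d)))) : Prop :=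
  ∀ P ∈ Pfam, ∀ Q ∈ Pfam, (∀ H ∈ HH, projMeasure H P = projMeasure H Q) → P = Q

/-!
Suppose `P ≠ Q`. Writing `P - Q = ∑ c_R R` over the at most `2m` distinct components `R` of `P` and
`Q`, some coefficient `c_{R₀}` is nonzero. For `H ∈ ℋ` the projections satisfy `∑ c_R R_H = 0`, and
linear independence of the distinct `R_H` forces the coefficients of the components with
`R_H = (R₀)_H` to sum to zero, so some component `R ≠ R₀` has the same projection onto `H` as `R₀`.
Colouring `H` by such an `R` uses at most `2m - 1` colours, so some colour class is a Cramér–Wold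
system; its colour `R` then equals `R₀`, a contradiction. (An empty class is a Cramér–Wold system
only if `𝒫` has a single member, and then `P = Q` outright.)
-/

open scoped Classical

noncomputable def mixtureWeight {β ι : Type*} [Fintype ι] (x : ι → β) (lam : ι → ℝ≥0) (b : β) :
    ℝ≥0 :=
  ∑ j with x j = b, lam j

lemma sum_smul_eq_sum_mixtureWeight_smul {β ι M : Type*} [Fintype ι] [AddCommMonoid M]
    [Module ℝ≥0 M] {x : ι → β} {T : Finset β} (hT : ∀ j, x j ∈ T) (lam : ι → ℝ≥0) (f : β → M) :
    ∑ j, lam j • f (x j) = ∑ b ∈ T, mixtureWeight x lam b • f b := by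
  rw [← Finset.sum_fiberwise_of_maps_to fun j _ => hT j]
  refine Finset.sum_congr rfl fun b _ => ?_
  rw [mixtureWeight, Finset.sum_smul]
  exact Finset.sum_congr rfl fun j hj => by rw [(Finset.mem_filter.1 hj).2]

lemma sum_smul_eq_of_forall_eq {ι R M : Type*} [Fintype ι] [Semiring R] [AddCommMonoid M]
    [Module R M] {x : ι → M} {y : M} (hx : ∀ j, x j = y) {lam : ι → R} (hlam : ∑ j, lam j = 1) :
    ∑ j, lam j • x j = y := by
  simp only [hx, ← Finset.sum_smul, hlam, one_smul]

lemma exists_mixtureWeight_ne_of_sum_smul_ne {ι M : Type*} [Fintype ι] [AddCommMonoid M]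
    [Module ℝ≥0 M] {x y : ι → M} {T : Finset M} (hx : ∀ j, x j ∈ T) (hy : ∀ j, y j ∈ T)
    {lam nu : ι → ℝ≥0} (hne : ∑ j, lam j • x j ≠ ∑ j, nu j • y j) :
    ∃ b ∈ T, mixtureWeight x lam b ≠ mixtureWeight y nu b := by
  by_contra! h
  refine hne ?_
  calc ∑ j, lam j • x j = ∑ b ∈ T, mixtureWeight x lam b • b :=
        sum_smul_eq_sum_mixtureWeight_smul hx lam fun b => b
    _ = ∑ b ∈ T, mixtureWeight y nu b • b := Finset.sum_congr rfl fun b hb => by rw [h b hb]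
    _ = ∑ j, nu j • y j := (sum_smul_eq_sum_mixtureWeight_smul hy nu fun b => b).symm

lemma card_erase_image_union_image_le {ι β : Type*} [Fintype ι] (x y : ι → β) {b : β}
    (hb : b ∈ Finset.univ.image x ∪ Finset.univ.image y) :
    ((Finset.univ.image x ∪ Finset.univ.image y).erase b).card ≤ 2 * Fintype.card ι - 1 := by
  have hcard : (Finset.univ.image x ∪ Finset.univ.image y).card ≤ 2 * Fintype.card ι :=
    calc _ ≤ (Finset.univ.image x).card + (Finset.univ.image y).card := Finset.card_union_le _ _
      _ ≤ Fintype.card ι + Fintype.card ι := add_le_add Finset.card_image_le Finset.card_image_le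
      _ = 2 * Fintype.card ι := (two_mul _).symm
  rw [Finset.card_erase_of_mem hb]
  omega

lemma exists_fiber_of_forall_coloring {α β : Type*} {k : ℕ} (hk : 0 < k) {p : Set α → Prop}
    {A : Set α} {S : Finset β} (hS : S.card ≤ k) {g : α → β} (hg : Set.MapsTo g A S)
    (hp : ∀ f : α → Fin k, ∃ i, p {a ∈ A | f a = i}) :
    p ∅ ∨ ∃ b ∈ S, p {a ∈ A | g a = b} := by
  let e : S ↪ Fin k := S.equivFin.toEmbedding.trans (Fin.castLEEmb hS)
  obtain ⟨i, hi⟩ := hp fun a => if h : g a ∈ S then e ⟨g a, h⟩ else ⟨0, hk⟩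
  by_cases hrange : ∃ b : S, e b = i
  · obtain ⟨b, rfl⟩ := hrange
    refine Or.inr ⟨b, b.2, ?_⟩
    convert hi using 1
    ext a
    refine and_congr_right fun ha => ?_
    rw [dif_pos (Finset.mem_coe.1 (hg ha)), e.injective.eq_iff, Subtype.ext_iff]
  · left
    convert hi using 1
    ext a
    simp only [Set.mem_empty_iff_false, Set.mem_ofPred_eq, false_iff, not_and]
    intro ha h
    rw [dif_pos (Finset.mem_coe.1 (hg ha))] at h
    exact hrange ⟨_, h⟩

lemma measureReal_finsetSum_nnreal_smul_apply {α ι : Type*} [MeasurableSpace α] (t : Finset ι)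
    (w : ι → ℝ≥0) (μ : ι → Measure α) (hμ : ∀ i ∈ t, IsFiniteMeasure (μ i)) (s : Set α) :
    (∑ i ∈ t, w i • μ i).real s = ∑ i ∈ t, w i • (μ i).real s := by
  rw [measureReal_def, Measure.finsetSum_apply, ENNReal.toReal_sum]
  · refine Finset.sum_congr rfl fun i _ => ?_
    rw [← measureReal_def, measureReal_nnreal_smul_apply, NNReal.smul_def, smul_eq_mul]
  · intro i hi
    have := hμ i hi
    exact measure_ne_top _ _

lemma LinIndepMeasures.eq_zero_of_sum_real_eq_zero {α : Type*} [MeasurableSpace α]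
    {F : Set (Measure α)} (hF : LinIndepMeasures F) {T : Finset (Measure α)}
    (hTF : ∀ μ ∈ T, μ ∈ F) (hfin : ∀ μ ∈ T, IsFiniteMeasure μ) (c : Measure α → ℝ)
    (hc : ∀ s, MeasurableSet s → ∑ μ ∈ T, c μ * μ.real s = 0) : ∀ μ ∈ T, c μ = 0 := by
  let e : Fin T.card ≃ T := T.equivFin.symm
  have hfin' : ∀ i, IsFiniteMeasure (e i : Measure α) := fun i => hfin _ (e i).2
  have hzero := hF T.card (fun i => e i) hfin' (fun i => hTF _ (e i).2)
    (Subtype.val_injective.comp e.injective) (fun i => c (e i)) ?_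
  · intro μ hμ
    simpa using hzero (e.symm ⟨μ, hμ⟩)
  · ext s hs
    simp only [sum_apply, smul_apply, Measure.toSignedMeasure_apply_measurable hs, smul_eq_mul,
      zero_apply]
    rw [← hc s hs, ← Finset.sum_coe_sort T]
    exact e.sum_comp (fun μ : T => c μ * (μ : Measure α).real s)

lemma LinIndepMeasures.exists_ne_map_eq {α ι : Type*} [MeasurableSpace α]
    {F : Set (Measure α)} (hF : LinIndepMeasures F) (g : ι → Measure α) {T : Finset ι}
    (hTF : ∀ i ∈ T, g i ∈ F) (hfin : ∀ i ∈ T, IsFiniteMeasure (g i)) (c : ι → ℝ)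
    (hc : ∀ s, MeasurableSet s → ∑ i ∈ T, c i * (g i).real s = 0) {i₀ : ι} (hi₀ : i₀ ∈ T)
    (hci₀ : c i₀ ≠ 0) : ∃ i ∈ T.erase i₀, g i = g i₀ := by
  have hmaps : ∀ i ∈ T, g i ∈ T.image g := fun i hi => Finset.mem_image_of_mem g hi
  have hfiber : ∑ i ∈ T with g i = g i₀, c i = 0 := by
    refine hF.eq_zero_of_sum_real_eq_zero (T := T.image g) (by simpa using hTF)
      (by simpa using hfin) (fun μ => ∑ i ∈ T with g i = μ, c i) (fun s hs => ?_) _ (hmaps i₀ hi₀)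
    rw [← hc s hs, ← Finset.sum_fiberwise_of_maps_to hmaps]
    refine Finset.sum_congr rfl fun μ _ => ?_
    rw [Finset.sum_mul]
    exact Finset.sum_congr rfl fun i hi => by rw [(Finset.mem_filter.1 hi).2]
  by_contra! h
  refine hci₀ ((Finset.sum_eq_single_of_mem i₀ ?_ fun i hi hne => ?_).symm.trans hfiber)
  · exact Finset.mem_filter.2 ⟨hi₀, rfl⟩
  · obtain ⟨hiT, hgi⟩ := Finset.mem_filter.1 hi
    exact absurd hgi (h i (Finset.mem_erase.2 ⟨hne, hiT⟩))

lemma measurable_orthogonalProjection_coe {d : ℕ} (H : Submodule ℝ (EuclideanSpace ℝ (Fin d))) :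
    Measurable fun x : EuclideanSpace ℝ (Fin d) =>
      (H.orthogonalProjection x : EuclideanSpace ℝ (Fin d)) :=
  (continuous_subtype_val.comp H.orthogonalProjection.continuous).measurable

instance isFiniteMeasure_projMeasure {d : ℕ} (H : Submodule ℝ (EuclideanSpace ℝ (Fin d)))
    (μ : Measure (EuclideanSpace ℝ (Fin d))) [IsFiniteMeasure μ] :
    IsFiniteMeasure (projMeasure H μ) := by
  unfold projMeasure
  infer_instance

lemma projMeasure_real_sum_smul {d : ℕ} {ι : Type*} [Fintype ι]
    (H : Submodule ℝ (EuclideanSpace ℝ (Fin d))) {Ps : ι → Measure (EuclideanSpace ℝ (Fin d))}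
    (hPs : ∀ j, IsFiniteMeasure (Ps j)) (lam : ι → ℝ≥0)
    {T : Finset (Measure (EuclideanSpace ℝ (Fin d)))} (hT : ∀ j, Ps j ∈ T)
    {s : Set (EuclideanSpace ℝ (Fin d))} (hs : MeasurableSet s) :
    (projMeasure H (∑ j, lam j • Ps j)).real s
      = ∑ R ∈ T, (mixtureWeight Ps lam R : ℝ) * (projMeasure H R).real s := by
  have hproj : ∀ μ, (projMeasure H μ).real s
      = μ.real ((fun x => (H.orthogonalProjection x : EuclideanSpace ℝ (Fin d))) ⁻¹' s) :=
    fun μ => map_measureReal_apply (measurable_orthogonalProjection_coe H) hs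
  rw [hproj, measureReal_finsetSum_nnreal_smul_apply _ _ _ fun j _ => hPs j,
    sum_smul_eq_sum_mixtureWeight_smul hT lam fun R => R.real _]
  simp only [hproj, NNReal.smul_def, smul_eq_mul]

lemma LinIndepMeasures.exists_ne_projMeasure_eq {d : ℕ} {ι : Type*} [Fintype ι]
    {H : Submodule ℝ (EuclideanSpace ℝ (Fin d))} {Pfam : Set (Measure (EuclideanSpace ℝ (Fin d)))}
    (hH : LinIndepMeasures (projMeasure H '' Pfam)) (hfin : ∀ R ∈ Pfam, IsFiniteMeasure R)
    {T : Finset (Measure (EuclideanSpace ℝ (Fin d)))} (hTP : ∀ R ∈ T, R ∈ Pfam)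
    {Ps Qs : ι → Measure (EuclideanSpace ℝ (Fin d))} (hPsT : ∀ j, Ps j ∈ T) (hQsT : ∀ j, Qs j ∈ T)
    {lam nu : ι → ℝ≥0}
    (hproj : projMeasure H (∑ j, lam j • Ps j) = projMeasure H (∑ j, nu j • Qs j))
    {R₀ : Measure (EuclideanSpace ℝ (Fin d))} (hR₀ : R₀ ∈ T)
    (hc : mixtureWeight Ps lam R₀ ≠ mixtureWeight Qs nu R₀) :
    ∃ R ∈ T.erase R₀, projMeasure H R = projMeasure H R₀ := by
  refine hH.exists_ne_map_eq (projMeasure H) (fun R hR => ⟨R, hTP R hR, rfl⟩)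
    (fun R hR => have := hfin R (hTP R hR); inferInstance)
    (fun R => (mixtureWeight Ps lam R : ℝ) - mixtureWeight Qs nu R) (fun s hs => ?_) hR₀
    (sub_ne_zero.2 (NNReal.coe_injective.ne hc))
  have hPH := projMeasure_real_sum_smul H (fun j => hfin _ (hTP _ (hPsT j))) lam hPsT hs
  have hQH := projMeasure_real_sum_smul H (fun j => hfin _ (hTP _ (hQsT j))) nu hQsT hs
  rw [Finset.sum_congr rfl fun R _ => sub_mul _ _ _, Finset.sum_sub_distrib, ← hPH, ← hQH, hproj,
    sub_self]

/-- A Cramér–Wold theorem for mixtures. -/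
theorem cramerWold_mixture {d m : ℕ} (hm : 1 ≤ m)
    (Pfam : Set (Measure (EuclideanSpace ℝ (Fin d))))
    (hprob : ∀ P ∈ Pfam, IsProbabilityMeasure P)
    (HH : Set (Submodule ℝ (EuclideanSpace ℝ (Fin d))))
    (h1 : ∀ H ∈ HH, LinIndepMeasures ((projMeasure H) '' Pfam))
    (h2 : ∀ f : Submodule ℝ (EuclideanSpace ℝ (Fin d)) → Fin (2 * m - 1),
      ∃ i, IsCramerWoldSystem Pfam {H ∈ HH | f H = i})
    (P Q : Measure (EuclideanSpace ℝ (Fin d)))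
    (lam nu : Fin m → ℝ≥0) (Ps Qs : Fin m → Measure (EuclideanSpace ℝ (Fin d)))
    (hPs : ∀ j, Ps j ∈ Pfam) (hQs : ∀ j, Qs j ∈ Pfam)
    (hlam : ∑ j, lam j = 1) (hnu : ∑ j, nu j = 1)
    (hP : P = ∑ j, lam j • Ps j) (hQ : Q = ∑ j, nu j • Qs j)
    (hproj : ∀ H ∈ HH, projMeasure H P = projMeasure H Q) :
    P = Q := by
  by_contra hPQ
  have hfin : ∀ R ∈ Pfam, IsFiniteMeasure R := fun R hR => have := hprob R hR; inferInstance
  set T := Finset.univ.image Ps ∪ Finset.univ.image Qs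
  have hPsT : ∀ j, Ps j ∈ T := fun j => by simp [T]
  have hQsT : ∀ j, Qs j ∈ T := fun j => by simp [T]
  have hTP : ∀ R ∈ T, R ∈ Pfam := by
    simp only [T, Finset.mem_union, Finset.mem_image, Finset.mem_univ, true_and]
    rintro R (⟨j, rfl⟩ | ⟨j, rfl⟩)
    exacts [hPs j, hQs j]
  obtain ⟨R₀, hR₀, hc⟩ := exists_mixtureWeight_ne_of_sum_smul_ne hPsT hQsT (hP ▸ hQ ▸ hPQ)
  choose! g hgT hg using fun H hH =>
    (h1 H hH).exists_ne_projMeasure_eq hfin hTP hPsT hQsT (hP ▸ hQ ▸ hproj H hH) hR₀ hc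
  have hcard : (T.erase R₀).card ≤ 2 * m - 1 := by
    simpa using card_erase_image_union_image_le Ps Qs hR₀
  rcases exists_fiber_of_forall_coloring (by omega) hcard hgT h2 with hCW | ⟨R, hR, hCW⟩
  · have hR₀eq : ∀ R ∈ Pfam, R = R₀ := fun R hR => hCW R hR R₀ (hTP R₀ hR₀) (by simp)
    exact hPQ (by rw [hP, hQ, sum_smul_eq_of_forall_eq (fun j => hR₀eq _ (hPs j)) hlam,
      sum_smul_eq_of_forall_eq (fun j => hR₀eq _ (hQs j)) hnu])
  · refine (Finset.mem_erase.1 hR).1 (hCW R (hTP R (Finset.mem_of_mem_erase hR)) R₀ (hTP R₀ hR₀) ?_)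
    rintro H ⟨hH, rfl⟩
    exact hg H hH
end

section
/- The family of univariate Gaussian density functions {f_{μ,σ} : μ ∈ ℝ, σ > 0}, where f_{μ,σ}(x) = (1/√(2πσ²)) exp(−(x−μ)²/(2σ²)), is linearly independent: if (μ₁,σ₁),…,(μₙ,σₙ) are distinct parameter pairs and λ₁,…,λₙ are real numbers with Σⱼ λⱼ f_{μⱼ,σⱼ}(x) = 0 for all x ∈ ℝ, then all λⱼ = 0. -/
/-!
Each density is a positive constant times `exp (a x² + b x)` with `(a, b) = (-1/(2σ²), μ/σ²)`, and
for `σ > 0` the parameters `(μ, σ)` are recovered from `(a, b)`. Ordered lexicographically in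
`(a, b)`, each such exponential is little-o at `+∞` of every larger one, so in a vanishing linear
combination the coefficient of the largest term must vanish.
-/

open Real

/-- The univariate Gaussian density with mean `μ` and standard deviation `σ`. -/
noncomputable def gaussianDensity (μ σ x : ℝ) : ℝ :=
  (Real.sqrt (2 * Real.pi * σ ^ 2))⁻¹ * Real.exp (-(x - μ) ^ 2 / (2 * σ ^ 2))

open Filter Asymptotics

theorem linearIndependent_of_isLittleO {ι α 𝕜 : Type*} [LinearOrder ι] [NormedField 𝕜]
    {l : Filter α} {v : ι → α → 𝕜} (hne : ∀ i, ∃ᶠ x in l, v i x ≠ 0)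
    (hlo : ∀ ⦃i j⦄, i < j → v i =o[l] v j) : LinearIndependent 𝕜 v := by
  rw [linearIndependent_iff]
  intro c hc
  induction c using Finsupp.induction_on_max with
  | zero => rfl
  | single_add a b f hlt hb _ =>
    rw [map_add, Finsupp.linearCombination_single, Finsupp.linearCombination_apply,
      Finsupp.sum] at hc
    have hrel : (fun x => b * v a x) = fun x => -∑ i ∈ f.support, f i * v i x := by
      funext x
      simpa [eq_neg_iff_add_eq_zero] using congrFun hc x
    have hsmall : (fun x => b * v a x) =o[l] v a := by
      rw [hrel]
      exact (IsLittleO.fun_sum fun i hi => (hlo (hlt i hi)).const_mul_left (f i)).neg_left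
    exact absurd ((isLittleO_const_mul_left_iff hb).mp hsmall) (isLittleO_irrefl (hne a))

noncomputable def expQuadratic (q : ℝ × ℝ) (x : ℝ) : ℝ :=
  exp (q.1 * x ^ 2 + q.2 * x)

theorem tendsto_quadratic_atTop {a b : ℝ} (h : 0 < a ∨ a = 0 ∧ 0 < b) :
    Tendsto (fun x => a * x ^ 2 + b * x) atTop atTop := by
  rcases h with ha | ⟨rfl, hb⟩
  · have hlin : Tendsto (fun x => a * x + b) atTop atTop :=
      tendsto_atTop_add_const_right _ b (tendsto_id.const_mul_atTop ha)
    exact (tendsto_id.atTop_mul_atTop₀ hlin).congr fun x => by simp only [id]; ring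
  · simpa using tendsto_id.const_mul_atTop hb

theorem isLittleO_expQuadratic_of_toLex_lt {q r : ℝ × ℝ} (h : toLex q < toLex r) :
    expQuadratic q =o[atTop] expQuadratic r := by
  have hgap : 0 < r.1 - q.1 ∨ r.1 - q.1 = 0 ∧ 0 < r.2 - q.2 := by
    rcases Prod.Lex.toLex_lt_toLex.mp h with h | ⟨h1, h2⟩
    · exact Or.inl (sub_pos.mpr h)
    · exact Or.inr ⟨sub_eq_zero.mpr h1.symm, sub_pos.mpr h2⟩
  exact isLittleO_exp_comp_exp_comp.mpr ((tendsto_quadratic_atTop hgap).congr fun x => by ring)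

theorem linearIndependent_expQuadratic : LinearIndependent ℝ expQuadratic := by
  have hlex : LinearIndependent ℝ (expQuadratic ∘ ofLex) :=
    linearIndependent_of_isLittleO (l := atTop)
      (fun _ => (Eventually.of_forall fun _ => exp_ne_zero _).frequently)
      (fun _ _ h => isLittleO_expQuadratic_of_toLex_lt h)
  exact hlex.comp toLex toLex.injective

noncomputable def gaussianNaturalParam (q : ℝ × ℝ) : ℝ × ℝ :=
  (-(2 * q.2 ^ 2)⁻¹, q.1 / q.2 ^ 2)

-- At `σ = 0` both sides vanish, as `(√0)⁻¹ = 0`.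
theorem gaussianDensity_eq_mul_expQuadratic (μ σ x : ℝ) :
    gaussianDensity μ σ x =
      gaussianDensity μ σ 0 * expQuadratic (gaussianNaturalParam (μ, σ)) x := by
  rw [gaussianDensity, gaussianDensity, expQuadratic, gaussianNaturalParam,
    mul_assoc _ (exp _), ← exp_add]
  congr 2
  ring

theorem gaussianDensity_pos (μ x : ℝ) {σ : ℝ} (hσ : σ ≠ 0) : 0 < gaussianDensity μ σ x := by
  unfold gaussianDensity
  positivity

theorem gaussianNaturalParam_injOn : Set.InjOn gaussianNaturalParam {q | 0 < q.2} := by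
  intro q hq r hr h
  simp only [gaussianNaturalParam, Prod.mk.injEq, neg_inj, inv_inj] at h
  obtain ⟨hsq, hmean⟩ := h
  replace hsq := mul_left_cancel₀ two_ne_zero hsq
  rw [hsq, div_left_inj' (pow_pos hr 2).ne'] at hmean
  exact Prod.ext hmean ((sq_eq_sq₀ hq.le hr.le).mp hsq)

theorem linearIndepOn_gaussianDensity :
    LinearIndepOn ℝ (fun q : ℝ × ℝ => gaussianDensity q.1 q.2) {q | 0 < q.2} := by
  have hne (q : {q : ℝ × ℝ | 0 < q.2}) : gaussianDensity q.1.1 q.1.2 0 ≠ 0 :=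
    (gaussianDensity_pos _ _ q.2.ne').ne'
  have hli := (linearIndependent_expQuadratic.comp _
    (Set.injOn_iff_injective.mp gaussianNaturalParam_injOn)).units_smul
      fun q => Units.mk0 _ (hne q)
  rw [LinearIndepOn]
  convert hli using 1
  funext q x
  exact gaussianDensity_eq_mul_expQuadratic _ _ x

/-- The family of univariate Gaussian densities is linearly independent. -/
theorem gaussianDensity_linearIndependent (n : ℕ) (p : Fin n → ℝ × ℝ)
    (hσ : ∀ j, 0 < (p j).2) (hdist : Function.Injective p)
    (lam : Fin n → ℝ)
    (h : ∀ x : ℝ, ∑ j, lam j * gaussianDensity (p j).1 (p j).2 x = 0) :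
    ∀ j, lam j = 0 := by
  have hli := LinearIndependent.comp linearIndepOn_gaussianDensity (fun j => ⟨p j, hσ j⟩)
    fun i j hij => hdist (congrArg Subtype.val hij)
  exact Fintype.linearIndependent_iff.mp hli lam (funext fun x => by simpa using h x)
end
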